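/- Let κ ∈ ℝ with κ ≠ −2 and κ ≠ −3/2, let U ⊆ ℝ³ be open, and let u, v : ℝ³ → ℝ be smooth with v_x > 0 on U. Suppose that on U the covering equations v_t = (2κ+3)⁻¹·v_x^(2κ+3) − u_x·v_x^(κ+2) + (½(κ+1)·u_x² − u_y)·v_x and v_y = (κ+2)⁻¹·v_x^(κ+2) − u_x·v_x hold (powers are real powers of the positive number v_x). Then u satisfies equation (mdKP_κ): u_yy = u_tx + (½(κ+1)·u_x² + u_y)·u_xx + κ·u_x·u_xy at every point of U. -/

import Mathlib

/-- Partial derivative with respect to the first coordinate `t` of `(t,x,y) : ℝ × ℝ × ℝ`. -/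
noncomputable def pd_t (f : ℝ × ℝ × ℝ → ℝ) (p : ℝ × ℝ × ℝ) : ℝ :=
  deriv (fun s => f (s, p.2.1, p.2.2)) p.1

/-- Partial derivative with respect to the second coordinate `x`. -/
noncomputable def pd_x (f : ℝ × ℝ × ℝ → ℝ) (p : ℝ × ℝ × ℝ) : ℝ :=
  deriv (fun s => f (p.1, s, p.2.2)) p.2.1

/-- Partial derivative with respect to the third coordinate `y`. -/
noncomputable def pd_y (f : ℝ × ℝ × ℝ → ℝ) (p : ℝ × ℝ × ℝ) : ℝ :=
  deriv (fun s => f (p.1, p.2.1, s)) p.2.2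

open Filter

private lemma pd_t_eq {f : ℝ × ℝ × ℝ → ℝ} {p : ℝ × ℝ × ℝ} (hf : DifferentiableAt ℝ f p) :
    pd_t f p = fderiv ℝ f p (1, 0, 0) := by
  have hline : HasDerivAt (fun s : ℝ => ((s, p.2.1, p.2.2) : ℝ × ℝ × ℝ)) (1, 0, 0) p.1 :=
    HasDerivAt.prodMk (hasDerivAt_id _) (HasDerivAt.prodMk (hasDerivAt_const _ _) (hasDerivAt_const _ _))
  have hfp : HasFDerivAt f (fderiv ℝ f p) (p.1, p.2.1, p.2.2) := by
    simpa using hf.hasFDerivAt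
  exact (hfp.comp_hasDerivAt p.1 hline).deriv

private lemma pd_x_eq {f : ℝ × ℝ × ℝ → ℝ} {p : ℝ × ℝ × ℝ} (hf : DifferentiableAt ℝ f p) :
    pd_x f p = fderiv ℝ f p (0, 1, 0) := by
  have hline : HasDerivAt (fun s : ℝ => ((p.1, s, p.2.2) : ℝ × ℝ × ℝ)) (0, 1, 0) p.2.1 :=
    HasDerivAt.prodMk (hasDerivAt_const _ _) (HasDerivAt.prodMk (hasDerivAt_id _) (hasDerivAt_const _ _))
  have hfp : HasFDerivAt f (fderiv ℝ f p) (p.1, p.2.1, p.2.2) := by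
    simpa using hf.hasFDerivAt
  exact (hfp.comp_hasDerivAt p.2.1 hline).deriv

private lemma pd_y_eq {f : ℝ × ℝ × ℝ → ℝ} {p : ℝ × ℝ × ℝ} (hf : DifferentiableAt ℝ f p) :
    pd_y f p = fderiv ℝ f p (0, 0, 1) := by
  have hline : HasDerivAt (fun s : ℝ => ((p.1, p.2.1, s) : ℝ × ℝ × ℝ)) (0, 0, 1) p.2.2 :=
    HasDerivAt.prodMk (hasDerivAt_const _ _) (HasDerivAt.prodMk (hasDerivAt_const _ _) (hasDerivAt_id _))
  have hfp : HasFDerivAt f (fderiv ℝ f p) (p.1, p.2.1, p.2.2) := by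
    simpa using hf.hasFDerivAt
  exact (hfp.comp_hasDerivAt p.2.2 hline).deriv

private lemma contDiff_pd_t {f : ℝ × ℝ × ℝ → ℝ} (hf : ContDiff ℝ (⊤ : ℕ∞) f) :
    ContDiff ℝ (⊤ : ℕ∞) (pd_t f) := by
  have h : pd_t f = fun p => fderiv ℝ f p (1, 0, 0) :=
    funext fun p => pd_t_eq (hf.differentiable (by simp) p)
  rw [h]
  exact (hf.fderiv_right (by simp)).clm_apply contDiff_const

private lemma contDiff_pd_x {f : ℝ × ℝ × ℝ → ℝ} (hf : ContDiff ℝ (⊤ : ℕ∞) f) :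
    ContDiff ℝ (⊤ : ℕ∞) (pd_x f) := by
  have h : pd_x f = fun p => fderiv ℝ f p (0, 1, 0) :=
    funext fun p => pd_x_eq (hf.differentiable (by simp) p)
  rw [h]
  exact (hf.fderiv_right (by simp)).clm_apply contDiff_const

private lemma contDiff_pd_y {f : ℝ × ℝ × ℝ → ℝ} (hf : ContDiff ℝ (⊤ : ℕ∞) f) :
    ContDiff ℝ (⊤ : ℕ∞) (pd_y f) := by
  have h : pd_y f = fun p => fderiv ℝ f p (0, 0, 1) :=
    funext fun p => pd_y_eq (hf.differentiable (by simp) p)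
  rw [h]
  exact (hf.fderiv_right (by simp)).clm_apply contDiff_const

private lemma fderiv_swap {f : ℝ × ℝ × ℝ → ℝ} (hf : ContDiff ℝ (⊤ : ℕ∞) f)
    (p w₁ w₂ : ℝ × ℝ × ℝ) :
    fderiv ℝ (fun q => fderiv ℝ f q w₁) p w₂ = fderiv ℝ (fun q => fderiv ℝ f q w₂) p w₁ := by
  have hdf : Differentiable ℝ (fderiv ℝ f) := (hf.fderiv_right (m := (⊤ : ℕ∞)) (by simp)).differentiable (by simp)
  have key : ∀ w : ℝ × ℝ × ℝ,
      fderiv ℝ (fun q => fderiv ℝ f q w) p = (fderiv ℝ (fderiv ℝ f) p).flip w := by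
    intro w
    have h := fderiv_clm_apply (hdf p) (differentiableAt_const w)
    simpa using h
  rw [key w₁, key w₂]
  simp only [ContinuousLinearMap.flip_apply]
  exact second_derivative_symmetric (fun y => (hf.differentiable (by simp) y).hasFDerivAt)
    ((hdf p).hasFDerivAt) w₂ w₁

private lemma pd_comm_tx {f : ℝ × ℝ × ℝ → ℝ} (hf : ContDiff ℝ (⊤ : ℕ∞) f) (p : ℝ × ℝ × ℝ) :
    pd_t (pd_x f) p = pd_x (pd_t f) p := by
  have hd := hf.differentiable (by simp)
  have hx : pd_x f = fun q => fderiv ℝ f q (0, 1, 0) := funext fun q => pd_x_eq (hd q)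
  have ht : pd_t f = fun q => fderiv ℝ f q (1, 0, 0) := funext fun q => pd_t_eq (hd q)
  rw [pd_t_eq ((contDiff_pd_x hf).differentiable (by simp) p),
    pd_x_eq ((contDiff_pd_t hf).differentiable (by simp) p), hx, ht]
  exact fderiv_swap hf p _ _

private lemma pd_comm_yx {f : ℝ × ℝ × ℝ → ℝ} (hf : ContDiff ℝ (⊤ : ℕ∞) f) (p : ℝ × ℝ × ℝ) :
    pd_y (pd_x f) p = pd_x (pd_y f) p := by
  have hd := hf.differentiable (by simp)
  have hx : pd_x f = fun q => fderiv ℝ f q (0, 1, 0) := funext fun q => pd_x_eq (hd q)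
  have hy : pd_y f = fun q => fderiv ℝ f q (0, 0, 1) := funext fun q => pd_y_eq (hd q)
  rw [pd_y_eq ((contDiff_pd_x hf).differentiable (by simp) p),
    pd_x_eq ((contDiff_pd_y hf).differentiable (by simp) p), hx, hy]
  exact fderiv_swap hf p _ _

private lemma pd_comm_yt {f : ℝ × ℝ × ℝ → ℝ} (hf : ContDiff ℝ (⊤ : ℕ∞) f) (p : ℝ × ℝ × ℝ) :
    pd_y (pd_t f) p = pd_t (pd_y f) p := by
  have hd := hf.differentiable (by simp)
  have ht : pd_t f = fun q => fderiv ℝ f q (1, 0, 0) := funext fun q => pd_t_eq (hd q)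
  have hy : pd_y f = fun q => fderiv ℝ f q (0, 0, 1) := funext fun q => pd_y_eq (hd q)
  rw [pd_y_eq ((contDiff_pd_t hf).differentiable (by simp) p),
    pd_t_eq ((contDiff_pd_y hf).differentiable (by simp) p), ht, hy]
  exact fderiv_swap hf p _ _

/-- the covering (39) implies the mdKP equation (real powers of `v_x > 0`). -/
theorem covering_WE2_implies_mdKP (κ : ℝ) (hκ2 : κ ≠ -2) (hκ32 : κ ≠ -(3 / 2))
    (U : Set (ℝ × ℝ × ℝ)) (hU : IsOpen U)
    (u v : ℝ × ℝ × ℝ → ℝ) (hu : ContDiff ℝ (⊤ : ℕ∞) u) (hv : ContDiff ℝ (⊤ : ℕ∞) v)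
    (hvx : ∀ q ∈ U, 0 < pd_x v q)
    (hvt : ∀ q ∈ U, pd_t v q =
      (2 * κ + 3)⁻¹ * pd_x v q ^ (2 * κ + 3)
      - pd_x u q * pd_x v q ^ (κ + 2)
      + ((κ + 1) / 2 * (pd_x u q) ^ 2 - pd_y u q) * pd_x v q)
    (hvy : ∀ q ∈ U, pd_y v q = (κ + 2)⁻¹ * pd_x v q ^ (κ + 2) - pd_x u q * pd_x v q) :
    ∀ p ∈ U,
      pd_y (pd_y u) p =
        pd_t (pd_x u) p
        + ((κ + 1) / 2 * (pd_x u p) ^ 2 + pd_y u p) * pd_x (pd_x u) p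
        + κ * pd_x u p * pd_y (pd_x u) p := by
  intro p hp
  have hA : ContDiff ℝ (⊤ : ℕ∞) (pd_x v) := contDiff_pd_x hv
  have hP : ContDiff ℝ (⊤ : ℕ∞) (pd_x u) := contDiff_pd_x hu
  have hQ : ContDiff ℝ (⊤ : ℕ∞) (pd_y u) := contDiff_pd_y hu
  have hT : ContDiff ℝ (⊤ : ℕ∞) (pd_t v) := contDiff_pd_t hv
  have hY : ContDiff ℝ (⊤ : ℕ∞) (pd_y v) := contDiff_pd_y hv
  have hAp : DifferentiableAt ℝ (pd_x v) p := hA.differentiable (by simp) p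
  have hPp : DifferentiableAt ℝ (pd_x u) p := hP.differentiable (by simp) p
  have hQp : DifferentiableAt ℝ (pd_y u) p := hQ.differentiable (by simp) p
  have hTp : DifferentiableAt ℝ (pd_t v) p := hT.differentiable (by simp) p
  have hYp : DifferentiableAt ℝ (pd_y v) p := hY.differentiable (by simp) p
  have ha : 0 < pd_x v p := hvx p hp
  have h23 : (2 * κ + 3 : ℝ) ≠ 0 := by intro h; exact hκ32 (by linarith)
  have hk2 : (κ + 2 : ℝ) ≠ 0 := by intro h; exact hκ2 (by linarith)
  have hA' : HasFDerivAt (pd_x v) (fderiv ℝ (pd_x v) p) p := hAp.hasFDerivAt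
  have hP' : HasFDerivAt (pd_x u) (fderiv ℝ (pd_x u) p) p := hPp.hasFDerivAt
  have hQ' : HasFDerivAt (pd_y u) (fderiv ℝ (pd_y u) p) p := hQp.hasFDerivAt
  -- rpow rewrites
  have hrb2 : pd_x v p ^ (2 * κ + 3 - 1) = pd_x v p ^ (κ + 1) * pd_x v p ^ (κ + 1) := by
    rw [show (2 * κ + 3 - 1) = (κ + 1) + (κ + 1) by ring, Real.rpow_add ha]
  have hrb : pd_x v p ^ (κ + 2 - 1) = pd_x v p ^ (κ + 1) := by
    rw [show (κ + 2 - 1) = κ + 1 by ring]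
  have hrba : pd_x v p ^ (κ + 2) = pd_x v p ^ (κ + 1) * pd_x v p := by
    rw [show (κ + 2) = (κ + 1) + 1 by ring, Real.rpow_add ha, Real.rpow_one]
  -- equation 1
  have hEq1 : pd_t v =ᶠ[nhds p] (fun q =>
      (2 * κ + 3)⁻¹ * pd_x v q ^ (2 * κ + 3) - pd_x u q * pd_x v q ^ (κ + 2)
      + ((κ + 1) / 2 * (pd_x u q * pd_x u q) - pd_y u q) * pd_x v q) := by
    filter_upwards [hU.mem_nhds hp] with q hq
    rw [hvt q hq]; ring
  have hD1 := (((hA'.rpow_const (p := 2 * κ + 3) (Or.inl ha.ne')).const_mul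
      ((2 * κ + 3)⁻¹)).sub
      (hP'.mul (hA'.rpow_const (p := κ + 2) (Or.inl ha.ne')))).add
      ((((hP'.mul hP').const_mul ((κ + 1) / 2)).sub hQ').mul hA')
  have hfd1 := hEq1.fderiv_eq.trans hD1.fderiv
  -- equation 2
  have hEq2 : pd_y v =ᶠ[nhds p] (fun q =>
      (κ + 2)⁻¹ * pd_x v q ^ (κ + 2) - pd_x u q * pd_x v q) := by
    filter_upwards [hU.mem_nhds hp] with q hq
    rw [hvy q hq]
  have hD2 := ((hA'.rpow_const (p := κ + 2) (Or.inl ha.ne')).const_mul ((κ + 2)⁻¹)).sub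
      (hP'.mul hA')
  have hfd2 := hEq2.fderiv_eq.trans hD2.fderiv
  -- scalar directional derivative formulas
  have E1 : ∀ w : ℝ × ℝ × ℝ, fderiv ℝ (pd_t v) p w =
      pd_x v p ^ (κ + 1) * pd_x v p ^ (κ + 1) * fderiv ℝ (pd_x v) p w
      - pd_x v p ^ (κ + 1) * pd_x v p * fderiv ℝ (pd_x u) p w
      - (κ + 2) * pd_x u p * pd_x v p ^ (κ + 1) * fderiv ℝ (pd_x v) p w
      + ((κ + 1) / 2 * pd_x u p ^ 2 - pd_y u p) * fderiv ℝ (pd_x v) p w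
      + pd_x v p * ((κ + 1) * pd_x u p * fderiv ℝ (pd_x u) p w - fderiv ℝ (pd_y u) p w) := by
    intro w
    rw [hfd1]
    simp only [ContinuousLinearMap.add_apply, ContinuousLinearMap.sub_apply,
      ContinuousLinearMap.smul_apply, smul_eq_mul, Pi.sub_apply, Pi.mul_apply]
    rw [hrb2, hrb, hrba]
    field_simp
    ring
  have E2 : ∀ w : ℝ × ℝ × ℝ, fderiv ℝ (pd_y v) p w =
      pd_x v p ^ (κ + 1) * fderiv ℝ (pd_x v) p w
      - pd_x u p * fderiv ℝ (pd_x v) p w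
      - pd_x v p * fderiv ℝ (pd_x u) p w := by
    intro w
    rw [hfd2]
    simp only [ContinuousLinearMap.add_apply, ContinuousLinearMap.sub_apply,
      ContinuousLinearMap.smul_apply, smul_eq_mul]
    rw [hrb]
    field_simp
    ring
  -- mixed partial swaps
  have swap1 : fderiv ℝ (pd_x v) p (1, 0, 0) = fderiv ℝ (pd_t v) p (0, 1, 0) := by
    rw [← pd_t_eq hAp, ← pd_x_eq hTp]; exact pd_comm_tx hv p
  have swap2 : fderiv ℝ (pd_x v) p (0, 0, 1) = fderiv ℝ (pd_y v) p (0, 1, 0) := by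
    rw [← pd_y_eq hAp, ← pd_x_eq hYp]; exact pd_comm_yx hv p
  have swap3 : fderiv ℝ (pd_t v) p (0, 0, 1) = fderiv ℝ (pd_y v) p (1, 0, 0) := by
    rw [← pd_y_eq hTp, ← pd_t_eq hYp]; exact pd_comm_yt hv p
  have h4 : fderiv ℝ (pd_x u) p (0, 0, 1) = fderiv ℝ (pd_y u) p (0, 1, 0) := by
    rw [← pd_y_eq hPp, ← pd_x_eq hQp]; exact pd_comm_yx hu p
  have h1c := swap1.trans (E1 (0, 1, 0))
  have h2c := swap2.trans (E2 (0, 1, 0))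
  have h3c := (E1 (0, 0, 1)).symm.trans (swap3.trans (E2 (1, 0, 0)))
  rw [h4] at h3c
  -- rewrite the goal in terms of fderiv applications
  rw [pd_y_eq hQp, pd_t_eq hPp, pd_x_eq hPp, pd_y_eq hPp, h4]
  have key : pd_x v p * (fderiv ℝ (pd_y u) p (0, 0, 1)
      - (fderiv ℝ (pd_x u) p (1, 0, 0)
        + ((κ + 1) / 2 * pd_x u p ^ 2 + pd_y u p) * fderiv ℝ (pd_x u) p (0, 1, 0)
        + κ * pd_x u p * fderiv ℝ (pd_y u) p (0, 1, 0))) = 0 := by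
    linear_combination (-1 : ℝ) * h3c
      - (pd_x v p ^ (κ + 1) - pd_x u p) * h1c
      + (pd_x v p ^ (κ + 1) * pd_x v p ^ (κ + 1)
        - (κ + 2) * pd_x u p * pd_x v p ^ (κ + 1)
        + ((κ + 1) / 2 * pd_x u p ^ 2 - pd_y u p)) * h2c
  rcases mul_eq_zero.mp key with h | h
  · exact absurd h ha.ne'
  · linarith
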